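/- For every integer m ≥ 3, the cycle C_m on m vertices is 2-approximately magic; that is, there exists a bijection f from the edge set of C_m to {1, 2, ..., m} such that every vertex sum lies in {m, m+1, m+2} (in particular, the difference between the largest and the smallest vertex sums is at most 2). -/

import Mathlib

/-- The vertex sum at `v` under an edge labeling `f`: the sum of the labels of all
edges incident with `v`. -/
noncomputable def vertexSum {V : Type*} [Finite V] (G : SimpleGraph V)
    (f : Sym2 V → ℕ) (v : V) : ℕ :=
  ∑ e ∈ (G.incidenceSet v).toFinite.toFinset, f e

/-- A graph is antimagic if there is a bijection from its edge set to `{1, ..., m}`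
(`m` = number of edges) such that all vertex sums are pairwise distinct. -/
def IsAntimagic {V : Type*} [Finite V] (G : SimpleGraph V) : Prop :=
  ∃ f : Sym2 V → ℕ,
    Set.BijOn f G.edgeSet (Set.Icc 1 (Nat.card G.edgeSet)) ∧
    ∀ u v : V, u ≠ v → vertexSum G f u ≠ vertexSum G f v

/-!
Number the edges of `C_m` by `i = 0, …, m - 1`, edge `i` joining vertices `i` and `i + 1`, so
that the vertex sum at `i + 1` is the sum of the labels of edges `i` and `i + 1`. For odd `m` the
labels `1, m - 1, 3, m - 3, …, 2, m` along the cycle give neighbouring sums alternately `m` and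
`m + 2`, and `m + 1` where the cycle closes up; for even `m` the same zigzag, reflected at the
halfway point, does the job.
-/

open SimpleGraph

def cycleLabel (m i : ℕ) : ℕ :=
  if (i % 2 = 0 ↔ (2 * i < m ∨ m % 2 = 1)) then i + 1 else m - i

lemma cycleLabel_bijOn (m : ℕ) :
    Set.BijOn (fun i : Fin m => cycleLabel m i) Set.univ (Set.Icc 1 m) := by
  refine ⟨fun i _ => ?_, fun i _ j _ h => Fin.ext ?_, fun y hy => ?_⟩
  · have := i.isLt
    simp only [Set.mem_Icc, cycleLabel]
    split_ifs <;> omega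
  · have := i.isLt; have := j.isLt
    simp only [cycleLabel] at h
    split_ifs at h <;> omega
  · obtain ⟨hy1, hy2⟩ := hy
    by_cases h : ((y - 1) % 2 = 0 ↔ (2 * (y - 1) < m ∨ m % 2 = 1))
    · exact ⟨⟨y - 1, by omega⟩, trivial, by simp only [cycleLabel, if_pos h]; omega⟩
    · exact ⟨⟨m - y, by omega⟩, trivial, by simp only [cycleLabel]; split_ifs <;> omega⟩

lemma cycleLabel_add_cycleLabel_succ_mod {m i : ℕ} (hi : i < m) :
    cycleLabel m i + cycleLabel m ((i + 1) % m) ∈ ({m, m + 1, m + 2} : Set ℕ) := by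
  simp only [Set.mem_insert_iff, Set.mem_singleton_iff]
  rcases Nat.lt_or_ge (i + 1) m with h | h
  · rw [Nat.mod_eq_of_lt h]
    unfold cycleLabel; split_ifs <;> omega
  · rw [show i + 1 = m by omega, Nat.mod_self]
    unfold cycleLabel; split_ifs <;> omega

lemma vertexSum_eq_sum_neighborFinset {V : Type*} [Fintype V] (G : SimpleGraph V)
    [DecidableRel G.Adj] (f : Sym2 V → ℕ) (v : V) :
    vertexSum G f v = ∑ w ∈ G.neighborFinset v, f s(v, w) := by
  classical
  rw [vertexSum, ← Finset.sum_image (fun _ _ _ _ h => Sym2.congr_right.mp h)]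
  congr 1
  ext e
  induction e using Sym2.ind with
  | _ a b =>
    simp only [Set.Finite.mem_toFinset, mk'_mem_incidenceSet_iff, Finset.mem_image,
      mem_neighborFinset, Sym2.eq_iff]
    grind [SimpleGraph.adj_symm]

section CycleEdgeLabel

variable {n : ℕ}

lemma Fin.add_one_add_one_ne_self (u : Fin (n + 3)) : u + 1 + 1 ≠ u := by
  rw [add_assoc, Ne, add_eq_left, Fin.ext_iff, Fin.val_add, Fin.val_one,
    Nat.mod_eq_of_lt (by omega : 1 + 1 < n + 3), Fin.val_zero]
  omega

def cycleEdgeLabel (g : Fin (n + 3) → ℕ) : Sym2 (Fin (n + 3)) → ℕ :=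
  Sym2.lift ⟨fun u v => if v = u + 1 then g u else if u = v + 1 then g v else 0, fun u v => by
    dsimp only
    by_cases hv : v = u + 1 <;> by_cases hu : u = v + 1
    · exact absurd (hu ▸ hv).symm (Fin.add_one_add_one_ne_self v)
    · rw [if_pos hv, if_neg hu, if_pos hv]
    · rw [if_neg hv, if_pos hu, if_pos hu]
    · rw [if_neg hv, if_neg hu, if_neg hu, if_neg hv]⟩

@[simp] lemma cycleEdgeLabel_mk_add_one (g : Fin (n + 3) → ℕ) (u : Fin (n + 3)) :
    cycleEdgeLabel g s(u, u + 1) = g u := by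
  simp [cycleEdgeLabel]

lemma edgeSet_cycleGraph_eq_range :
    (cycleGraph (n + 3)).edgeSet = Set.range fun u => s(u, u + 1) := by
  ext e
  induction e using Sym2.ind with
  | _ a b =>
    simp only [mem_edgeSet, cycleGraph_adj, Set.mem_range, Sym2.eq_iff, sub_eq_iff_eq_add']
    grind

lemma injective_mk_add_one : Function.Injective fun u : Fin (n + 3) => s(u, u + 1) := by
  intro u w h
  simp only [Sym2.eq_iff] at h
  rcases h with ⟨h, -⟩ | ⟨rfl, h⟩
  · exact h
  · exact absurd h (Fin.add_one_add_one_ne_self w)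

lemma bijOn_cycleEdgeLabel {g : Fin (n + 3) → ℕ} {t : Set ℕ} (hg : Set.BijOn g Set.univ t) :
    Set.BijOn (cycleEdgeLabel g) (cycleGraph (n + 3)).edgeSet t := by
  rw [edgeSet_cycleGraph_eq_range, ← Set.image_univ,
    ← Set.bijOn_comp_iff injective_mk_add_one.injOn]
  simpa [Function.comp_def] using hg

lemma vertexSum_cycleEdgeLabel (g : Fin (n + 3) → ℕ) (v : Fin (n + 3)) :
    vertexSum (cycleGraph (n + 3)) (cycleEdgeLabel g) v = g (v - 1) + g v := by
  have hne : v - 1 ≠ v + 1 := by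
    have := Fin.add_one_add_one_ne_self (v - 1)
    rw [sub_add_cancel] at this
    exact this.symm
  rw [vertexSum_eq_sum_neighborFinset, cycleGraph_neighborFinset, Finset.sum_pair hne,
    Sym2.eq_swap, ← cycleEdgeLabel_mk_add_one g (v - 1), sub_add_cancel,
    cycleEdgeLabel_mk_add_one]

end CycleEdgeLabel

/-- For every `m ≥ 3`, the cycle `C_m` is 2-approximately magic: there is a bijection
from its edge set to `{1, ..., m}` such that every vertex sum lies in `{m, m+1, m+2}`. -/
theorem cycle_two_approx_magic (m : ℕ) (hm : 3 ≤ m) :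
    ∃ f : Sym2 (Fin m) → ℕ,
      Set.BijOn f (SimpleGraph.cycleGraph m).edgeSet (Set.Icc 1 m) ∧
      ∀ v : Fin m,
        vertexSum (SimpleGraph.cycleGraph m) f v ∈ ({m, m + 1, m + 2} : Set ℕ) := by
  obtain ⟨n, rfl⟩ : ∃ n, m = n + 3 := ⟨m - 3, by omega⟩
  refine ⟨cycleEdgeLabel fun u => cycleLabel (n + 3) u,
    bijOn_cycleEdgeLabel (cycleLabel_bijOn _), fun v => ?_⟩
  have hv : (v : ℕ) = ((v - 1 : Fin (n + 3)) + 1) % (n + 3) := by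
    conv_lhs => rw [← sub_add_cancel v 1]
    rw [Fin.val_add, Fin.val_one]
  rw [vertexSum_cycleEdgeLabel, hv]
  exact cycleLabel_add_cycleLabel_succ_mod (v - 1).isLt
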